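/- Let N ≥ 4 and let G act on ℝ^N ≡ ℂ² × ℝ^{N−4} by g(z₁, z₂, y) := (g z₁, ḡ z₂, y). Then any given sequences (ε_k) in (0, ∞) and (ζ_k) in ℝ^N contain subsequences (indexed by the same indices) satisfying one of the following: (i) there exist η_k ∈ {0} × ℝ^{N−4} and a constant C₁ > 0 such that ε_k^{−1} |ζ_k − η_k| < C₁ for all k; or (ii) for each m ∈ ℕ there exist g₁, …, g_m ∈ G such that ε_k^{−1} |g_i ζ_k − g_j ζ_k| → ∞ as k → ∞ for all i ≠ j. -/

import Mathlib

open MeasureTheory Filter Metric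
open scoped Real ENNReal Topology RealInnerProductSpace

noncomputable section

/-- `ℝ^N`. -/
abbrev RN (N : ℕ) := EuclideanSpace ℝ (Fin N)

/-- The critical Sobolev exponent `p* = Np/(N-p)`. -/
def pStar (N : ℕ) (p : ℝ) : ℝ := N * p / (N - p)

/-- Test functions: smooth, compactly supported, with support contained in `Ω`. -/
def IsTest (N : ℕ) (Ω : Set (RN N)) (φ : RN N → ℝ) : Prop :=
  ContDiff ℝ (⊤ : ℕ∞) φ ∧ HasCompactSupport φ ∧ tsupport φ ⊆ Ω

/-- `V` is the weak (distributional) gradient of `u`. -/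
def IsWeakGrad (N : ℕ) (u : RN N → ℝ) (V : RN N → RN N) : Prop :=
  ∀ φ : RN N → ℝ, ContDiff ℝ (⊤ : ℕ∞) φ → HasCompactSupport φ →
    ∀ i : Fin N, (∫ x, u x * fderiv ℝ φ x (EuclideanSpace.single i 1))
      = - ∫ x, V x i * φ x

/-- An element of `D^{1,p}(ℝ^N)`: a function in `L^{p*}` together with its weak
gradient, which lies in `L^p`. -/
structure D1p (N : ℕ) (p : ℝ) where
  toFun : RN N → ℝ
  grad : RN N → RN N
  memLp_star : MemLp toFun (ENNReal.ofReal (pStar N p)) volume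
  grad_memLp : MemLp grad (ENNReal.ofReal p) volume
  isWeakGrad : IsWeakGrad N toFun grad

/-- `‖u‖_p ^ p`, the `p`-th power of the `D^{1,p}` norm. -/
def gradPow (N : ℕ) (p : ℝ) (u : D1p N p) : ℝ := ∫ x, ‖u.grad x‖ ^ p

/-- Membership in `D_0^{1,p}(Ω)`: `u` is approximated, in the `D^{1,p}` norm, by
smooth functions with compact support contained in `Ω`. -/
def InD0 (N : ℕ) (p : ℝ) (Ω : Set (RN N)) (u : D1p N p) : Prop :=
  ∃ φ : ℕ → RN N → ℝ, (∀ k, IsTest N Ω (φ k)) ∧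
    Tendsto (fun k => ∫ x, ‖gradient (φ k) x - u.grad x‖ ^ p) atTop (𝓝 0)

/-- The best Sobolev constant `S_p` for the embedding `D^{1,p}(ℝ^N) ↪ L^{p*}(ℝ^N)`. -/
def SobolevS (N : ℕ) (p : ℝ) : ℝ :=
  sInf { r | ∃ u : D1p N p, ¬ (u.toFun =ᵐ[volume] (0 : RN N → ℝ)) ∧
    r = (∫ x, ‖u.grad x‖ ^ p) / (∫ x, |u.toFun x| ^ pStar N p) ^ (p / pStar N p) }

/-- `∫ |u|^{p*/2} |v|^{p*/2}`. -/
def pairInt (N : ℕ) (p : ℝ) (u v : D1p N p) : ℝ :=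
  ∫ x, |u.toFun x| ^ (pStar N p / 2) * |v.toFun x| ^ (pStar N p / 2)

/-- The energy functional `J` of the system with coupling matrix `β`. -/
def Jfun (N : ℕ) (p : ℝ) {ℓ : ℕ} (β : Fin ℓ → Fin ℓ → ℝ) (u : Fin ℓ → D1p N p) : ℝ :=
  (1 / p) * ∑ i, gradPow N p (u i)
    - (1 / pStar N p) * ∑ i, ∑ j, β i j * pairInt N p (u j) (u i)

/-- The Nehari-type set `M(Ω)`: all components are nontrivial and `∂_i J(u) u_i = 0`. -/
def InNehariM (N : ℕ) (p : ℝ) {ℓ : ℕ} (Ω : Set (RN N)) (β : Fin ℓ → Fin ℓ → ℝ)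
    (u : Fin ℓ → D1p N p) : Prop :=
  (∀ i, InD0 N p Ω (u i)) ∧
  ∀ i, ¬ ((u i).toFun =ᵐ[volume] (0 : RN N → ℝ)) ∧
    gradPow N p (u i) = ∑ j, β i j * pairInt N p (u j) (u i)

/-- `μ(Ω) = inf_{M(Ω)} J`. -/
def muOmega (N : ℕ) (p : ℝ) {ℓ : ℕ} (Ω : Set (RN N)) (β : Fin ℓ → Fin ℓ → ℝ) : ℝ :=
  sInf (Jfun N p β '' { u | InNehariM N p Ω β u })

/-- `u` is a weak solution, with components in `D_0^{1,p}(Ω)`, of the system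
`-Δ_p u_i = Σ_j β_ij |u_j|^{p*/2} |u_i|^{p*/2-2} u_i` in `Ω`. -/
def IsSystemSol (N : ℕ) (p : ℝ) {ℓ : ℕ} (Ω : Set (RN N)) (β : Fin ℓ → Fin ℓ → ℝ)
    (u : Fin ℓ → D1p N p) : Prop :=
  (∀ i, InD0 N p Ω (u i)) ∧
  ∀ i, ∀ φ : RN N → ℝ, IsTest N Ω φ →
    (∫ x, ‖(u i).grad x‖ ^ (p - 2) * (inner ℝ ((u i).grad x) (gradient φ x) : ℝ))
      = ∫ x, (∑ j, β i j * |(u j).toFun x| ^ (pStar N p / 2) *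
          |(u i).toFun x| ^ (pStar N p / 2 - 2) * (u i).toFun x) * φ x

/-- `w` is a weak solution of the critical equation `-Δ_p w = |w|^{p*-2} w` in `ℝ^N`. -/
def IsEqSol (N : ℕ) (p : ℝ) (w : D1p N p) : Prop :=
  ∀ φ : RN N → ℝ, ContDiff ℝ (⊤ : ℕ∞) φ → HasCompactSupport φ →
    (∫ x, ‖w.grad x‖ ^ (p - 2) * (inner ℝ (w.grad x) (gradient φ x) : ℝ))
      = ∫ x, |w.toFun x| ^ (pStar N p - 2) * w.toFun x * φ x

/-- A function changes sign: both `{u > 0}` and `{u < 0}` have positive measure. -/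
def SignChanging (N : ℕ) (u : RN N → ℝ) : Prop :=
  0 < volume {x | 0 < u x} ∧ 0 < volume {x | u x < 0}

/-- A function is nonradial: it is not a.e. equal to any radial function. -/
def Nonradial (N : ℕ) (u : RN N → ℝ) : Prop :=
  ¬ ∃ f : ℝ → ℝ, ∀ᵐ x, u x = f ‖x‖

/-- A domain: a nonempty connected open set. -/
def IsDomainSet (N : ℕ) (Ω : Set (RN N)) : Prop := IsOpen Ω ∧ IsConnected Ω

/-- `m_i = (1/N) β_ii^{-(N-p)/p} S_p^{N/p}`. -/
def mI (N : ℕ) (p b : ℝ) : ℝ :=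
  (1 / (N : ℝ)) * b ^ (-(((N : ℝ) - p) / p)) * SobolevS N p ^ ((N : ℝ) / p)

/-! ### The symmetries -/

/-- The action of a unit complex number `g` on `ℝ^N ≡ ℂ² × ℝ^{N-4}`:
`g(z₁, z₂, y) = (g z₁, ḡ z₂, y)`. -/
def cAct (N : ℕ) (g : ℂ) : RN N → RN N :=
  if h4 : 4 ≤ N then fun x =>
    let w1 : ℂ := g * ⟨x ⟨0, by omega⟩, x ⟨1, by omega⟩⟩
    let w2 : ℂ := (starRingEnd ℂ) g * ⟨x ⟨2, by omega⟩, x ⟨3, by omega⟩⟩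
    WithLp.toLp 2 (fun (i : Fin N) => if (i : ℕ) = 0 then w1.re else if (i : ℕ) = 1 then w1.im
      else if (i : ℕ) = 2 then w2.re else if (i : ℕ) = 3 then w2.im else x i)
  else fun x => x

/-- `τ(z₁, z₂) = (-z̄₂, z̄₁)` on `ℂ²`. -/
def tauC (z : ℂ × ℂ) : ℂ × ℂ := (-((starRingEnd ℂ) z.2), (starRingEnd ℂ) z.1)

/-- `(cos θ) z + (sin θ) τz` on `ℂ²`. -/
def rotC (θ : ℝ) (z : ℂ × ℂ) : ℂ × ℂ :=
  ((Real.cos θ : ℂ) * z.1 + (Real.sin θ : ℂ) * (tauC z).1,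
   (Real.cos θ : ℂ) * z.2 + (Real.sin θ : ℂ) * (tauC z).2)

/-- The map `(z, y) ↦ ((cos θ) z + (sin θ) τz, y)` on `ℝ^N ≡ ℂ² × ℝ^{N-4}`. -/
def rotMap (N : ℕ) (θ : ℝ) : RN N → RN N :=
  if h4 : 4 ≤ N then fun x =>
    let w := rotC θ (⟨x ⟨0, by omega⟩, x ⟨1, by omega⟩⟩, ⟨x ⟨2, by omega⟩, x ⟨3, by omega⟩⟩)
    WithLp.toLp 2 (fun (i : Fin N) => if (i : ℕ) = 0 then w.1.re else if (i : ℕ) = 1 then w.1.im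
      else if (i : ℕ) = 2 then w.2.re else if (i : ℕ) = 3 then w.2.im else x i)
  else fun x => x

/-- `ρ_ℓ = rotation by π/ℓ`. -/
def rhoMap (N ℓ : ℕ) : RN N → RN N := rotMap N (Real.pi / ℓ)

/-- `G`-invariance of a function on `ℝ^N`. -/
def GInv (N : ℕ) (u : RN N → ℝ) : Prop :=
  ∀ g : ℂ, ‖g‖ = 1 → ∀ x, u (cAct N g x) = u x

/-- The pinwheel symmetry conditions `(P₁)` and `(P₂)`. -/
def Pinwheel (N : ℕ) (p : ℝ) {ℓ : ℕ} [NeZero ℓ] (u : Fin ℓ → D1p N p) : Prop :=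
  (∀ j, GInv N (u j).toFun) ∧
  ∀ j : Fin ℓ, ∀ x, (u (j + 1)).toFun x = (u j).toFun (rhoMap N ℓ x)

/-- The coupling matrix of the symmetric system: `β_ii = 1`, `β_ij = β` for `i ≠ j`. -/
def symbeta (ℓ : ℕ) (β : ℝ) : Fin ℓ → Fin ℓ → ℝ := fun i j => if i = j then 1 else β

/-- Membership in `𝒟(Ω)`: components in `D_0^{1,p}(Ω)` with pinwheel symmetries. -/
def InDD (N : ℕ) (p : ℝ) {ℓ : ℕ} [NeZero ℓ] (Ω : Set (RN N)) (u : Fin ℓ → D1p N p) : Prop :=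
  (∀ i, InD0 N p Ω (u i)) ∧ Pinwheel N p u

/-- Membership in the Nehari set `𝒩(Ω)`: `u ∈ 𝒟(Ω)`, `u ≠ 0` and `J'(u)u = 0`. -/
def InNehariPinwheel (N : ℕ) (p : ℝ) {ℓ : ℕ} [NeZero ℓ] (Ω : Set (RN N)) (β : ℝ)
    (u : Fin ℓ → D1p N p) : Prop :=
  InDD N p Ω u ∧ (¬ ∀ i, (u i).toFun =ᵐ[volume] (0 : RN N → ℝ)) ∧
  ∑ i, gradPow N p (u i) = ∑ i, ∑ j, symbeta ℓ β i j * pairInt N p (u j) (u i)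

/-- `c(Ω) = inf_{𝒩(Ω)} J`. -/
def cOmega (N : ℕ) (p : ℝ) (ℓ : ℕ) [NeZero ℓ] (Ω : Set (RN N)) (β : ℝ) : ℝ :=
  sInf (Jfun N p (symbeta ℓ β) '' { u | InNehariPinwheel N p Ω β u })

/-- A domain invariant under the subgroup of `O(N)` generated by `G ∪ {ρ_ℓ}`
(equivalently, invariant under each of the generators, since `G` is a group and
`ρ_ℓ` has finite order). -/
def InvariantDomain (N ℓ : ℕ) (Ω : Set (RN N)) : Prop :=
  IsOpen Ω ∧ IsConnected Ω ∧
  (∀ g : ℂ, ‖g‖ = 1 → ∀ x ∈ Ω, cAct N g x ∈ Ω) ∧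
  (∀ x ∈ Ω, rhoMap N ℓ x ∈ Ω)

/-- The set `{0} × ℝ^{N-4}`. -/
def zSlice (N : ℕ) : Set (RN N) := { x | ∀ i : Fin N, (i : ℕ) < 4 → x i = 0 }

/-- A least energy pinwheel solution of the symmetric system in `Ω`. -/
def IsLeastEnergyPinwheelSol (N : ℕ) (p : ℝ) (ℓ : ℕ) [NeZero ℓ] (Ω : Set (RN N)) (β : ℝ)
    (u : Fin ℓ → D1p N p) : Prop :=
  InNehariPinwheel N p Ω β u ∧ IsSystemSol N p Ω (symbeta ℓ β) u ∧
  Jfun N p (symbeta ℓ β) u = cOmega N p ℓ Ω β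

/-! ### Matrix realization of the symmetry group -/

/-- Action of a matrix on `ℝ^N`. -/
def matVec (N : ℕ) (A : Matrix (Fin N) (Fin N) ℝ) (x : RN N) : RN N :=
  WithLp.toLp 2 (A.mulVec (fun i => x i))

/-- The generators of `Γ_ℓ` inside `O(N)`: the elements of `G` and `ρ_ℓ`. -/
def GammaGens (N ℓ : ℕ) : Set (Matrix.orthogonalGroup (Fin N) ℝ) :=
  { γ | (∃ g : ℂ, ‖g‖ = 1 ∧ ∀ x, matVec N γ.1 x = cAct N g x) ∨
        (∀ x, matVec N γ.1 x = rhoMap N ℓ x) }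

/-- `Γ_ℓ`: the subgroup of `O(N)` generated by `G ∪ {ρ_ℓ}`. -/
def GammaL (N ℓ : ℕ) : Subgroup (Matrix.orthogonalGroup (Fin N) ℝ) :=
  Subgroup.closure (GammaGens N ℓ)

/-- The `Γ_ℓ`-orbit of a point. -/
def orbitSet (N ℓ : ℕ) (x : RN N) : Set (RN N) :=
  { y | ∃ γ ∈ GammaL N ℓ, y = matVec N (γ : Matrix (Fin N) (Fin N) ℝ) x }

/-- The pairing `A(u,v) = Σ_i ∫ |∇u_i|^{p-2} ⟨∇u_i, ∇v_i⟩` (the gradient part of `J'(u)v`). -/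
def Apair (N : ℕ) (p : ℝ) {ℓ : ℕ} (u v : Fin ℓ → D1p N p) : ℝ :=
  ∑ i, ∫ x, ‖(u i).grad x‖ ^ (p - 2) * (inner ℝ ((u i).grad x) ((v i).grad x) : ℝ)

/-- The pairing `B(u,v) = Σ_i ∫ (Σ_j β_ij |u_j|^{p*/2} |u_i|^{p*/2-2} u_i) v_i`
(the nonlinear part of `J'(u)v` for the symmetric system). -/
def Bpair (N : ℕ) (p : ℝ) {ℓ : ℕ} (β : ℝ) (u v : Fin ℓ → D1p N p) : ℝ :=
  ∑ i, ∫ x, (∑ j, symbeta ℓ β i j * |(u j).toFun x| ^ (pStar N p / 2) *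
      |(u i).toFun x| ^ (pStar N p / 2 - 2) * (u i).toFun x) * (v i).toFun x

end


section Aux

lemma sum_four {N : ℕ} (hN : 4 ≤ N) (f : Fin N → ℝ) (hf : ∀ i : Fin N, 4 ≤ (i : ℕ) → f i = 0) :
    ∑ i, f i = f ⟨0, by omega⟩ + f ⟨1, by omega⟩ + f ⟨2, by omega⟩ + f ⟨3, by omega⟩ := by
  rw [← Finset.sum_subset
    (Finset.subset_univ ({⟨0, by omega⟩, ⟨1, by omega⟩, ⟨2, by omega⟩, ⟨3, by omega⟩} :
      Finset (Fin N)))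
    (fun x _ hx => hf x (by simp [Fin.ext_iff] at hx; omega))]
  rw [Finset.sum_insert (by simp [Fin.ext_iff]), Finset.sum_insert (by simp [Fin.ext_iff]),
    Finset.sum_insert (by simp [Fin.ext_iff]), Finset.sum_singleton]
  ring

/-- The projection killing the first four coordinates. -/
noncomputable def etaOf (N : ℕ) (x : RN N) : RN N := WithLp.toLp 2 (fun i => if (i : ℕ) < 4 then 0 else x i)

lemma etaOf_mem (N : ℕ) (x : RN N) : etaOf N x ∈ zSlice N := fun i hi => if_pos hi

/-- The quantity `sqrt(x₀²+x₁²+x₂²+x₃²)`. -/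
noncomputable def rOf (N : ℕ) (hN : 4 ≤ N) (x : RN N) : ℝ :=
  Real.sqrt ((x ⟨0, by omega⟩)^2 + (x ⟨1, by omega⟩)^2 + (x ⟨2, by omega⟩)^2 + (x ⟨3, by omega⟩)^2)

lemma norm_sub_etaOf {N : ℕ} (hN : 4 ≤ N) (x : RN N) : ‖x - etaOf N x‖ = rOf N hN x := by
  rw [EuclideanSpace.norm_eq, rOf]
  congr 1
  have key : ∀ i : Fin N, ‖(x - etaOf N x) i‖ ^ 2 =
      (fun n : ℕ => if n = 0 then (x ⟨0, by omega⟩)^2 else if n = 1 then (x ⟨1, by omega⟩)^2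
        else if n = 2 then (x ⟨2, by omega⟩)^2 else if n = 3 then (x ⟨3, by omega⟩)^2 else 0)
      (i : ℕ) := by
    intro i
    have hsub : (x - etaOf N x) i = x i - etaOf N x i := rfl
    rw [hsub, etaOf]
    rcases Nat.lt_or_ge (i : ℕ) 4 with h | h
    · interval_cases h' : (i : ℕ)
      · rw [show i = ⟨0, by omega⟩ from Fin.ext h']; simp [Real.norm_eq_abs, sq_abs]
      · rw [show i = ⟨1, by omega⟩ from Fin.ext h']; simp [Real.norm_eq_abs, sq_abs]
      · rw [show i = ⟨2, by omega⟩ from Fin.ext h']; simp [Real.norm_eq_abs, sq_abs]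
      · rw [show i = ⟨3, by omega⟩ from Fin.ext h']; simp [Real.norm_eq_abs, sq_abs]
    · have h0 : ¬ ((i:ℕ) = 0) := by omega
      have h1 : ¬ ((i:ℕ) = 1) := by omega
      have h2 : ¬ ((i:ℕ) = 2) := by omega
      have h3 : ¬ ((i:ℕ) = 3) := by omega
      simp [h0, h1, h2, h3, if_neg (by omega : ¬ ((i:ℕ) < 4))]
  rw [sum_four hN _ (fun i hi => by
    rw [key i]
    beta_reduce
    split_ifs <;> first | rfl | (exfalso; omega))]
  rw [key, key, key, key]
  norm_num

lemma norm_cAct_sub {N : ℕ} (hN : 4 ≤ N) (g g' : ℂ) (x : RN N) :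
    ‖cAct N g x - cAct N g' x‖ = ‖g - g'‖ * rOf N hN x := by
  set z1 : ℂ := ⟨x ⟨0, by omega⟩, x ⟨1, by omega⟩⟩ with hz1
  set z2 : ℂ := ⟨x ⟨2, by omega⟩, x ⟨3, by omega⟩⟩ with hz2
  have hact : ∀ h : ℂ, ∀ i : Fin N, cAct N h x i =
      if (i : ℕ) = 0 then (h * z1).re else if (i : ℕ) = 1 then (h * z1).im
      else if (i : ℕ) = 2 then ((starRingEnd ℂ) h * z2).re
      else if (i : ℕ) = 3 then ((starRingEnd ℂ) h * z2).im else x i := by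
    intro h i
    rw [cAct, dif_pos hN]
  rw [EuclideanSpace.norm_eq]
  set u : ℂ := (g - g') * z1 with hu
  set v : ℂ := (starRingEnd ℂ) (g - g') * z2 with hv
  have key : ∀ i : Fin N, ‖(cAct N g x - cAct N g' x) i‖ ^ 2 =
      (fun n : ℕ => if n = 0 then u.re^2 else if n = 1 then u.im^2
        else if n = 2 then v.re^2 else if n = 3 then v.im^2 else 0) (i : ℕ) := by
    intro i
    have hsub : (cAct N g x - cAct N g' x) i = cAct N g x i - cAct N g' x i := rfl
    rw [hsub, hact, hact]
    rcases Nat.lt_or_ge (i : ℕ) 4 with h | h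
    · interval_cases h' : (i : ℕ)
      · rw [show i = ⟨0, by omega⟩ from Fin.ext h']
        simp [Real.norm_eq_abs, sq_abs, hu, sub_mul, Complex.sub_re]
      · rw [show i = ⟨1, by omega⟩ from Fin.ext h']
        simp [Real.norm_eq_abs, sq_abs, hu, sub_mul, Complex.sub_im]
      · rw [show i = ⟨2, by omega⟩ from Fin.ext h']
        simp [Real.norm_eq_abs, sq_abs, hv, sub_mul, Complex.sub_re, map_sub]
      · rw [show i = ⟨3, by omega⟩ from Fin.ext h']
        simp [Real.norm_eq_abs, sq_abs, hv, sub_mul, Complex.sub_im, map_sub]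
    · have h0 : ¬ ((i:ℕ) = 0) := by omega
      have h1 : ¬ ((i:ℕ) = 1) := by omega
      have h2 : ¬ ((i:ℕ) = 2) := by omega
      have h3 : ¬ ((i:ℕ) = 3) := by omega
      simp [h0, h1, h2, h3]
  rw [sum_four hN _ (fun i hi => by
    rw [key i]
    beta_reduce
    split_ifs <;> first | rfl | (exfalso; omega))]
  rw [key, key, key, key]
  norm_num
  have h3 : Complex.normSq z1 = (x ⟨0, by omega⟩)^2 + (x ⟨1, by omega⟩)^2 := by
    rw [hz1, Complex.normSq_mk]; ring
  have h4 : Complex.normSq z2 = (x ⟨2, by omega⟩)^2 + (x ⟨3, by omega⟩)^2 := by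
    rw [hz2, Complex.normSq_mk]; ring
  have hU : u.re^2 + u.im^2 = Complex.normSq u := by rw [Complex.normSq_apply]; ring
  have hV : v.re^2 + v.im^2 = Complex.normSq v := by rw [Complex.normSq_apply]; ring
  have hU2 : Complex.normSq u = Complex.normSq (g - g') * ((x ⟨0, by omega⟩)^2 + (x ⟨1, by omega⟩)^2) := by
    rw [hu, Complex.normSq_mul, h3]
  have hV2 : Complex.normSq v = Complex.normSq (g - g') * ((x ⟨2, by omega⟩)^2 + (x ⟨3, by omega⟩)^2) := by
    rw [hv, Complex.normSq_mul, Complex.normSq_conj, h4]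
  have hsum : u.re^2 + u.im^2 + v.re^2 + v.im^2 =
      ‖g - g'‖ ^ 2 * ((x ⟨0, by omega⟩)^2 + (x ⟨1, by omega⟩)^2 + (x ⟨2, by omega⟩)^2 + (x ⟨3, by omega⟩)^2) := by
    rw [show u.re^2 + u.im^2 + v.re^2 + v.im^2 = (u.re^2 + u.im^2) + (v.re^2 + v.im^2) by ring,
      hU, hV, hU2, hV2, Complex.sq_norm]
    ring
  rw [show u.re ^ 2 + u.im ^ 2 + v.re ^ 2 + v.im ^ 2 = _ from hsum, rOf,
    Real.sqrt_mul (sq_nonneg _), Real.sqrt_sq (norm_nonneg _)]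

lemma exp_nat_mul_I_injective {a b : ℕ} (h : Complex.exp (a * Complex.I) = Complex.exp (b * Complex.I)) :
    a = b := by
  rw [Complex.exp_eq_exp_iff_exists_int] at h
  obtain ⟨n, hn⟩ := h
  have hI : (a : ℂ) * Complex.I = ((b : ℝ) + n * (2 * Real.pi)) * Complex.I := by
    rw [hn]; push_cast; ring
  have h2 := mul_right_cancel₀ Complex.I_ne_zero hI
  have hC : (a : ℂ) = (((b : ℝ) + n * (2 * Real.pi) : ℝ) : ℂ) := by rw [h2]; push_cast; ring
  have hre : (a : ℝ) = (b : ℝ) + n * (2 * Real.pi) := by exact_mod_cast hC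
  by_contra hab
  have hn0 : n ≠ 0 := by
    rintro rfl; simp at hre; exact hab (by exact_mod_cast hre)
  have hirr : Irrational (((2 * n : ℤ) : ℝ) * Real.pi) :=
    irrational_pi.intCast_mul (by omega)
  have : ((2 * n : ℤ) : ℝ) * Real.pi = ((a : ℤ) - b : ℤ) := by
    push_cast; linarith [hre]
  exact (this ▸ hirr).ne_int _ rfl

end Aux

section Theorems

theorem stmt9 (N : ℕ) (hN : 4 ≤ N) (ε : ℕ → ℝ) (hε : ∀ k, 0 < ε k) (ζ : ℕ → RN N) :
    ∃ κ : ℕ → ℕ, StrictMono κ ∧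
      ((∃ η : ℕ → RN N, (∀ k, η k ∈ zSlice N) ∧
          ∃ C : ℝ, 0 < C ∧ ∀ k, (ε (κ k))⁻¹ * ‖ζ (κ k) - η k‖ < C) ∨
       (∀ m : ℕ, ∃ g : Fin m → ℂ, (∀ i, ‖g i‖ = 1) ∧
          ∀ i j, i ≠ j →
            Filter.Tendsto
              (fun k => (ε (κ k))⁻¹ * ‖cAct N (g i) (ζ (κ k)) - cAct N (g j) (ζ (κ k))‖)
              Filter.atTop Filter.atTop)) := by
  classical
  set a : ℕ → ℝ := fun k => (ε k)⁻¹ * rOf N hN (ζ k) with ha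
  by_cases hb : ∃ C : ℝ, ∃ᶠ k in Filter.atTop, a k ≤ C
  · obtain ⟨C, hC⟩ := hb
    obtain ⟨κ, hκmono, hκ⟩ := Filter.extraction_of_frequently_atTop hC
    refine ⟨κ, hκmono, Or.inl ⟨fun k => etaOf N (ζ (κ k)), fun k => etaOf_mem N _,
      max C 0 + 1, by positivity, fun k => ?_⟩⟩
    rw [norm_sub_etaOf hN]
    have h1 : a (κ k) ≤ C := hκ k
    have h2 : (ε (κ k))⁻¹ * rOf N hN (ζ (κ k)) = a (κ k) := rfl
    rw [h2]
    linarith [le_max_left C 0]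
  · push_neg at hb
    have ht : Filter.Tendsto a Filter.atTop Filter.atTop := by
      rw [Filter.tendsto_atTop]
      intro b
      have h1 : ∀ᶠ k in Filter.atTop, ¬ a k ≤ b := (hb b).mono fun k hk => not_le.2 hk
      filter_upwards [h1] with k hk
      exact (not_le.1 hk).le
    refine ⟨id, strictMono_id, Or.inr fun m => ?_⟩
    refine ⟨fun i => Complex.exp ((((i : ℕ) : ℝ) : ℂ) * Complex.I), fun i => ?_, fun i j hij => ?_⟩
    · rw [Complex.norm_exp_ofReal_mul_I]
    · have hne : Complex.exp ((((i : ℕ) : ℝ) : ℂ) * Complex.I)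
          ≠ Complex.exp ((((j : ℕ) : ℝ) : ℂ) * Complex.I) := by
        intro h
        have h' : Complex.exp (((i : ℕ) : ℂ) * Complex.I)
            = Complex.exp (((j : ℕ) : ℂ) * Complex.I) := by push_cast at h ⊢; exact h
        exact hij (Fin.ext (exp_nat_mul_I_injective h'))
      set d : ℝ := ‖(Complex.exp ((((i : ℕ) : ℝ) : ℂ) * Complex.I)
        - Complex.exp ((((j : ℕ) : ℝ) : ℂ) * Complex.I))‖ with hd
      have hdpos : 0 < d := by
        rw [hd]
        exact norm_pos_iff.2 (sub_ne_zero.2 hne)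
      have heq : ∀ k : ℕ, (ε k)⁻¹ * ‖cAct N (Complex.exp ((((i : ℕ) : ℝ) : ℂ) * Complex.I)) (ζ k)
          - cAct N (Complex.exp ((((j : ℕ) : ℝ) : ℂ) * Complex.I)) (ζ k)‖ = d * a k := by
        intro k
        rw [norm_cAct_sub hN, ha]
        ring
      have := Filter.Tendsto.const_mul_atTop hdpos ht
      simpa only [heq, id_eq] using this


end Theorems
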